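/- arXiv:2011.04914 — 3 statements merged into one kernel-verified Lean document; each statement's English description precedes it below -/
import Mathlib

section
/- For an odd prime p, the edge-connectivity of the unit graph G(Z_p) equals p-2. -/
/-!
In the unit graph of a finite field `F` of odd characteristic, `x` is adjacent to every vertex
except `x` and `-x`, so every vertex has degree at least `|F| - 2`, with equality at `1`. Across a
cut `(W, Wᶜ)` each `x ∈ W` therefore misses at most one vertex of `Wᶜ`, and the cut has at least
`|W| (|Wᶜ| - 1) ≥ |F| - 2` edges once `|W| ≤ |Wᶜ|`, which may be assumed by symmetry.
-/

open SimpleGraph Finset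
open scoped Classical

/-- The unit graph of a commutative ring: distinct `x, y` adjacent iff `x + y` is a unit. -/
def unitGraphR (R : Type*) [CommRing R] : SimpleGraph R where
  Adj x y := x ≠ y ∧ IsUnit (x + y)
  symm := ⟨fun x y ⟨h1, h2⟩ => ⟨h1.symm, by rwa [add_comm]⟩⟩
  loopless := ⟨fun x ⟨h, _⟩ => h rfl⟩

/-- The unit graph of `ZMod n`. -/
def unitGraph (n : ℕ) : SimpleGraph (ZMod n) := unitGraphR (ZMod n)

/-- The number of edges of `G` with one endpoint in `W` and the other outside `W`. -/
noncomputable def cutSize {V : Type*} [Fintype V] (G : SimpleGraph V) (W : Finset V) : ℕ :=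
  (G.edgeFinset.filter (fun e => (∃ x ∈ e, x ∈ W) ∧ (∃ x ∈ e, x ∉ W))).card

/-- The edge-connectivity of `G`: minimum cut size over nonempty proper vertex subsets. -/
noncomputable def edgeConn {V : Type*} [Fintype V] (G : SimpleGraph V) : ℕ :=
  sInf {n | ∃ W : Finset V, W.Nonempty ∧ W ≠ Finset.univ ∧ n = cutSize G W}

/-- The incidence matrix of `G` over `F_2`, rows indexed by vertices, columns by edges. -/
noncomputable def incMat {V : Type*} [Fintype V] (G : SimpleGraph V) :
    Matrix V G.edgeFinset (ZMod 2) :=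
  fun v e => if v ∈ (e : Sym2 V) then 1 else 0

/-- The binary code generated by the rows of the incidence matrix of `G`. -/
noncomputable def rowCode {V : Type*} [Fintype V] (G : SimpleGraph V) :
    Submodule (ZMod 2) (G.edgeFinset → ZMod 2) :=
  Submodule.span (ZMod 2) (Set.range (incMat G))

/-- The minimum Hamming weight of a nonzero codeword of the incidence-matrix code of `G`. -/
noncomputable def minDist {V : Type*} [Fintype V] (G : SimpleGraph V) : ℕ :=
  sInf {w | ∃ c ∈ rowCode G, c ≠ 0 ∧ w = hammingNorm c}

section Cut

variable {V : Type*} [Fintype V] (G : SimpleGraph V)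

lemma cutSize_eq_sum_card_inter_neighborFinset (W : Finset V) :
    cutSize G W = ∑ x ∈ W, #(Wᶜ ∩ G.neighborFinset x) := by
  have hcard : #((W ×ˢ Wᶜ).filter (fun z => G.Adj z.1 z.2)) = cutSize G W := by
    refine card_bij (fun z _ => s(z.1, z.2)) ?_ ?_ ?_
    · rintro ⟨x, y⟩ hz
      simp only [mem_filter, mem_product, mem_compl] at hz ⊢
      exact ⟨G.mem_edgeFinset.2 hz.2, ⟨x, Sym2.mem_mk_left x y, hz.1.1⟩,
        ⟨y, Sym2.mem_mk_right x y, hz.1.2⟩⟩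
    · rintro ⟨a, b⟩ ha ⟨c, d⟩ hc h
      simp only [mem_filter, mem_product, mem_compl] at ha hc
      rcases Sym2.eq_iff.1 h with ⟨rfl, rfl⟩ | ⟨rfl, rfl⟩
      · rfl
      · exact absurd ha.1.1 hc.1.2
    · intro e he
      induction e using Sym2.ind with
      | _ u v =>
        simp only [mem_filter, mem_edgeFinset, mem_edgeSet] at he
        obtain ⟨hadj, ⟨a, ha, haW⟩, ⟨b, hb, hbW⟩⟩ := he
        rw [Sym2.mem_iff] at ha hb
        rcases ha with rfl | rfl <;> rcases hb with rfl | rfl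
        · exact absurd haW hbW
        · exact ⟨(a, b), by simp [haW, hbW, hadj], rfl⟩
        · exact ⟨(a, b), by simp [haW, hbW, hadj.symm], Sym2.eq_swap⟩
        · exact absurd haW hbW
  rw [← hcard, card_filter, sum_product]
  refine sum_congr rfl fun x _ => ?_
  rw [← card_filter]
  congr 1
  ext y
  simp

lemma cutSize_compl (W : Finset V) : cutSize G Wᶜ = cutSize G W := by
  unfold cutSize
  congr 1
  ext e
  simp only [mem_filter, mem_compl, not_not]
  tauto

lemma cutSize_singleton (v : V) : cutSize G {v} = G.degree v := by
  rw [cutSize_eq_sum_card_inter_neighborFinset, sum_singleton, ← card_neighborFinset_eq_degree,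
    inter_eq_right.2]
  intro w hw
  simpa using (G.ne_of_adj ((G.mem_neighborFinset v w).1 hw)).symm

lemma edgeConn_le_degree [Nontrivial V] (v : V) : edgeConn G ≤ G.degree v :=
  Nat.sInf_le ⟨{v}, singleton_nonempty v, singleton_ne_univ v, (cutSize_singleton G v).symm⟩

lemma le_edgeConn [Nontrivial V] {k : ℕ}
    (h : ∀ W : Finset V, W.Nonempty → W ≠ univ → k ≤ cutSize G W) : k ≤ edgeConn G := by
  obtain ⟨v⟩ : Nonempty V := inferInstance
  refine le_csInf ⟨_, {v}, singleton_nonempty v, singleton_ne_univ v, rfl⟩ ?_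
  rintro _ ⟨W, hne, hW, rfl⟩
  exact h W hne hW

lemma card_compl_sub_one_le_card_inter_neighborFinset {W : Finset V} {x : V} (hx : x ∈ W)
    (hdeg : Fintype.card V - 2 ≤ G.degree x) :
    #Wᶜ - 1 ≤ #(Wᶜ ∩ G.neighborFinset x) := by
  have hunion : Wᶜ ∪ G.neighborFinset x ⊆ univ.erase x := by
    intro y hy
    simp only [mem_union, mem_compl, mem_neighborFinset] at hy
    exact mem_erase.2 ⟨by rintro rfl; simp_all, mem_univ y⟩
  have hle := card_le_card hunion
  have hsum := card_union_add_card_inter Wᶜ (G.neighborFinset x)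
  rw [card_erase_of_mem (mem_univ x), card_univ] at hle
  rw [card_neighborFinset_eq_degree] at hsum
  omega

lemma card_sub_two_le_cutSize (hdeg : ∀ v, Fintype.card V - 2 ≤ G.degree v) {W : Finset V}
    (hne : W.Nonempty) (hW : W ≠ univ) : Fintype.card V - 2 ≤ cutSize G W := by
  wlog hle : #W ≤ #Wᶜ generalizing W
  · rw [← cutSize_compl]
    exact this ((compl_ne_univ_iff_nonempty Wᶜ).1 (by rwa [compl_compl]))
      ((compl_ne_univ_iff_nonempty W).2 hne) (by rw [compl_compl]; omega)
  have hpos : 0 < #W := hne.card_pos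
  calc Fintype.card V - 2 = #W + (#Wᶜ - 1) - 1 := by rw [← card_add_card_compl W]; omega
    _ ≤ #W * (#Wᶜ - 1) := by
        rcases Nat.eq_zero_or_pos (#Wᶜ - 1) with h | h
        · rw [h]; omega
        · generalize #Wᶜ - 1 = b at h ⊢
          zify [Nat.one_le_iff_ne_zero.2 (Nat.add_pos_left hpos b).ne']
          nlinarith
    _ = ∑ _x ∈ W, (#Wᶜ - 1) := by rw [sum_const, smul_eq_mul]
    _ ≤ cutSize G W := by
        rw [cutSize_eq_sum_card_inter_neighborFinset]
        exact sum_le_sum fun x hx => card_compl_sub_one_le_card_inter_neighborFinset G hx (hdeg x)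

end Cut

section UnitGraph

variable {F : Type*} [Field F] [Fintype F]

lemma unitGraphR_neighborFinset (x : F) :
    (unitGraphR F).neighborFinset x = ({x, -x} : Finset F)ᶜ := by
  ext y
  simp only [mem_neighborFinset, mem_compl, mem_insert, mem_singleton, not_or]
  show x ≠ y ∧ IsUnit (x + y) ↔ _
  rw [isUnit_iff_ne_zero, ne_comm, Ne, Ne, add_eq_zero_iff_eq_neg']

lemma card_sub_two_le_unitGraphR_degree (x : F) :
    Fintype.card F - 2 ≤ (unitGraphR F).degree x := by
  rw [← card_neighborFinset_eq_degree, unitGraphR_neighborFinset, card_compl]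
  exact Nat.sub_le_sub_left card_le_two _

lemma unitGraphR_degree_one (hF : ringChar F ≠ 2) :
    (unitGraphR F).degree 1 = Fintype.card F - 2 := by
  rw [← card_neighborFinset_eq_degree, unitGraphR_neighborFinset, card_compl,
    card_pair (Ring.neg_one_ne_one_of_char_ne_two hF).symm]

theorem edgeConn_unitGraphR (hF : ringChar F ≠ 2) :
    edgeConn (unitGraphR F) = Fintype.card F - 2 :=
  le_antisymm (unitGraphR_degree_one hF ▸ edgeConn_le_degree _ 1)
    (le_edgeConn _ fun _ hne hW =>
      card_sub_two_le_cutSize _ card_sub_two_le_unitGraphR_degree hne hW)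

end UnitGraph

theorem unitGraph_ZMod_p_edgeConn (p : ℕ) [Fact p.Prime] (hodd : Odd p) :
    edgeConn (unitGraph p) = p - 2 := by
  have hchar : ringChar (ZMod p) ≠ 2 := by
    rw [ZMod.ringChar_zmod_n]
    exact hodd.ne_two_of_dvd_nat dvd_rfl
  rw [unitGraph, edgeConn_unitGraphR hchar, ZMod.card]
end

section
/- Let R be a finite commutative ring in which 2 is not a unit. Then the unit graph G(R) is |U(R)|-regular, where U(R) is the group of units of R. -/
open SimpleGraph Finset
open scoped Classical

/-! The neighbours of `x` are the `y` with `x + y` a unit: the condition `y ≠ x` is automatic,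
since `x + x = 2 * x` is not a unit. Translation by `x` then matches them with the units of `R`. -/

section

variable {R : Type*} [CommRing R]

theorem unitGraphR_adj_iff_of_two_not_unit (h2 : ¬ IsUnit (2 : R)) {x y : R} :
    (unitGraphR R).Adj x y ↔ IsUnit (x + y) := by
  refine ⟨And.right, fun hxy => ⟨?_, hxy⟩⟩
  rintro rfl
  exact h2 (isUnit_of_mul_isUnit_left (two_mul x ▸ hxy))

variable [Fintype R]

theorem neighborFinset_unitGraphR_of_two_not_unit (h2 : ¬ IsUnit (2 : R)) (x : R)
    [Fintype ((unitGraphR R).neighborSet x)] :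
    (unitGraphR R).neighborFinset x = ({y | IsUnit (x + y)} : Finset R) := by
  ext y
  simp [unitGraphR_adj_iff_of_two_not_unit h2]

theorem card_filter_isUnit_add (x : R) : #{y | IsUnit (x + y)} = Fintype.card Rˣ := by
  rw [Fintype.card, eq_comm]
  refine card_bij (fun u _ => (u : R) - x) (fun u _ => ?_) (fun u _ v _ h => ?_) (fun y hy => ?_)
  · simp
  · exact Units.ext (sub_left_inj.mp h)
  · exact ⟨(mem_filter.mp hy).2.unit, mem_univ _, by simp⟩

end

theorem unitGraphR_regular_of_two_not_unit (R : Type*) [CommRing R] [Fintype R]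
    (h2 : ¬ IsUnit (2 : R)) :
    (unitGraphR R).IsRegularOfDegree (Fintype.card Rˣ) := by
  intro x
  rw [← card_neighborFinset_eq_degree, neighborFinset_unitGraphR_of_two_not_unit h2,
    card_filter_isUnit_add]
end

section
/- For an odd prime p, the binary code generated by the incidence matrix of the unit graph G(Z_p) has length (p-1)^2/2, dimension p-1, and minimum distance p-2. -/
open SimpleGraph Finset
open scoped Classical

/-!
A codeword is `f ᵥ* H` for some `f : V → 𝔽₂`. Its weight is the number of edges crossing the
cut `{f = 1}`, and it vanishes exactly when `f` is constant, the graph being connected; so the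
code has dimension `|V| - 1`. In the unit graph of a field of odd characteristic the only
non-neighbour of `x` other than `x` is `-x`. A cut with sides of sizes `k, l` therefore misses at
most `min k l` of its `k * l` pairs, leaving at least `k + l - 2 = q - 2` edges, a bound attained
by the row of the vertex `1`, whose degree is `q - 2`. The edge count follows from the degrees:
`q - 1` at `0` and `q - 2` elsewhere.
-/

open Matrix

namespace SimpleGraph

variable {V : Type*}

theorem Reachable.apply_eq_of_forall_adj {β : Type*} {G : SimpleGraph V} {f : V → β}
    (hf : ∀ x y, G.Adj x y → f x = f y) {u v : V} (h : G.Reachable u v) : f u = f v := by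
  rw [reachable_iff_reflTransGen] at h
  induction h with
  | refl => rfl
  | tail _ hxy ih => exact ih.trans (hf _ _ hxy)

variable [Fintype V] (G : SimpleGraph V)

theorem rowCode_eq_range_vecMulLinear :
    rowCode G = LinearMap.range (incMat G).vecMulLinear := by
  rw [range_vecMulLinear]
  rfl

theorem vecMul_incMat_apply_mk (f : V → ZMod 2) {a b : V} (he : s(a, b) ∈ G.edgeFinset) :
    (f ᵥ* incMat G) ⟨s(a, b), he⟩ = f a + f b := by
  have hab : a ≠ b := G.ne_of_adj (mem_edgeFinset.1 he)
  simp only [vecMul, dotProduct, incMat, mul_ite, mul_one, mul_zero]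
  rw [Fintype.sum_eq_add a b hab fun x hx => if_neg (by simpa [Sym2.mem_iff] using hx),
    if_pos (Sym2.mem_mk_left a b), if_pos (Sym2.mem_mk_right a b)]

theorem vecMul_incMat_one : (1 : V → ZMod 2) ᵥ* incMat G = 0 := by
  funext ⟨e, he⟩
  induction e using Sym2.ind with
  | _ a b => rw [vecMul_incMat_apply_mk]; rfl

theorem ker_vecMulLinear_incMat (hG : G.Preconnected) [Nonempty V] :
    LinearMap.ker (incMat G).vecMulLinear = Submodule.span (ZMod 2) {1} := by
  refine le_antisymm (fun f hf => ?_) ?_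
  · have hadj : ∀ x y, G.Adj x y → f x = f y := fun x y hxy => by
      have := congrFun (LinearMap.mem_ker.1 hf) ⟨s(x, y), mem_edgeFinset.2 hxy⟩
      rw [vecMulLinear_apply, vecMul_incMat_apply_mk] at this
      exact CharTwo.add_eq_zero.1 this
    obtain ⟨v⟩ := ‹Nonempty V›
    refine Submodule.mem_span_singleton.2 ⟨f v, funext fun x => ?_⟩
    simpa using (hG v x).apply_eq_of_forall_adj hadj
  · rw [Submodule.span_le, Set.singleton_subset_iff]
    exact vecMul_incMat_one G

theorem finrank_rowCode (hG : G.Connected) :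
    Module.finrank (ZMod 2) (rowCode G) = Fintype.card V - 1 := by
  have := hG.nonempty
  have hker : Module.finrank (ZMod 2) (LinearMap.ker (incMat G).vecMulLinear) = 1 := by
    rw [ker_vecMulLinear_incMat G hG.preconnected]
    exact finrank_span_singleton one_ne_zero
  have := LinearMap.finrank_range_add_finrank_ker (incMat G).vecMulLinear
  rw [Module.finrank_fintype_fun_eq_card, hker] at this
  rw [rowCode_eq_range_vecMulLinear]
  omega

theorem hammingNorm_vecMul_incMat (f : V → ZMod 2) :
    hammingNorm (f ᵥ* incMat G) =
      #(G.interedges {v | f v = 1} ({v | f v = 1} : Finset V)ᶜ) := by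
  have hval : ∀ x y : ZMod 2, x + y ≠ 0 ↔ x = 1 ∧ y ≠ 1 ∨ y = 1 ∧ x ≠ 1 := by decide
  symm
  refine card_bij
    (fun ab hab => ⟨s(ab.1, ab.2), mem_edgeFinset.2 (G.mem_interedges_iff.1 hab).2.2⟩) ?_ ?_ ?_
  · rintro ⟨a, b⟩ hab
    simp only [mem_interedges_iff, mem_compl, mem_filter, mem_univ, true_and] at hab
    simp only [mem_filter, mem_univ, true_and, vecMul_incMat_apply_mk]
    exact (hval _ _).2 (Or.inl ⟨hab.1, hab.2.1⟩)
  · rintro ⟨a, b⟩ hab ⟨a', b'⟩ hab' h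
    simp only [mem_interedges_iff, mem_compl, mem_filter, mem_univ, true_and] at hab hab'
    rcases Sym2.eq_iff.1 (Subtype.mk.inj h) with ⟨rfl, rfl⟩ | ⟨rfl, rfl⟩
    · rfl
    · exact absurd hab.1 hab'.2.1
  · rintro ⟨e, he⟩ hne
    induction e using Sym2.ind with
    | _ a b =>
      have hadj := mem_edgeFinset.1 he
      simp only [mem_filter, mem_univ, true_and, vecMul_incMat_apply_mk] at hne
      rcases (hval _ _).1 hne with ⟨ha, hb⟩ | ⟨hb, ha⟩
      · exact ⟨(a, b), by simpa [mem_interedges_iff] using ⟨ha, hb, hadj⟩, rfl⟩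
      · exact ⟨(b, a), by simpa [mem_interedges_iff] using ⟨hb, ha, hadj.symm⟩,
          Subtype.ext Sym2.eq_swap⟩

theorem card_sub_two_le_card_interedges
    (hG : ∀ x y z, Gᶜ.Adj x y → Gᶜ.Adj x z → y = z) {s : Finset V} (hs : s.Nonempty)
    (hs' : sᶜ.Nonempty) : Fintype.card V - 2 ≤ #(G.interedges s sᶜ) := by
  have hsplit := G.card_interedges_add_card_interedges_compl (disjoint_compl_right (a := s))
  have hfst : #(Gᶜ.interedges s sᶜ) ≤ #s := by
    refine card_le_card_of_injOn Prod.fst (fun ab hab => (Gᶜ.mem_interedges_iff.1 hab).1) ?_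
    rintro ⟨a, b⟩ hab ⟨a', b'⟩ hab' (rfl : a = a')
    simp only [mem_coe, mem_interedges_iff] at hab hab'
    exact congrArg (a, ·) (hG a b b' hab.2.2 hab'.2.2)
  have hsnd : #(Gᶜ.interedges s sᶜ) ≤ #sᶜ := by
    refine card_le_card_of_injOn Prod.snd (fun ab hab => (Gᶜ.mem_interedges_iff.1 hab).2.1) ?_
    rintro ⟨a, b⟩ hab ⟨a', b'⟩ hab' (rfl : b = b')
    simp only [mem_coe, mem_interedges_iff] at hab hab'
    exact congrArg (·, b) (hG b a a' hab.2.2.symm hab'.2.2.symm)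
  have hcard := card_add_card_compl s
  have hpos := hs.card_pos
  have hpos' := hs'.card_pos
  generalize #s = k at *
  generalize #sᶜ = k' at *
  obtain ⟨k, rfl⟩ : ∃ j, k = j + 1 := ⟨k - 1, by omega⟩
  obtain ⟨k', rfl⟩ : ∃ j, k' = j + 1 := ⟨k' - 1, by omega⟩
  rw [← hcard, show k + 1 + (k' + 1) - 2 = k + k' by omega]
  rcases Nat.eq_zero_or_pos k' with rfl | hk'
  · omega
  · nlinarith [Nat.mul_le_mul_left k hk']

theorem hammingNorm_incMat (v : V) : hammingNorm (incMat G v) = G.degree v := by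
  rw [← card_incidenceFinset_eq_degree, incidenceFinset_eq_filter, hammingNorm]
  simp only [incMat, ne_eq, ite_eq_right_iff, one_ne_zero, imp_false, not_not]
  rw [univ_eq_attach, filter_attach (fun e => v ∈ e), card_map, card_attach]

theorem card_sub_two_le_hammingNorm (hG : ∀ x y z, Gᶜ.Adj x y → Gᶜ.Adj x z → y = z)
    {c : G.edgeFinset → ZMod 2} (hc : c ∈ rowCode G) (hc0 : c ≠ 0) :
    Fintype.card V - 2 ≤ hammingNorm c := by
  rw [rowCode_eq_range_vecMulLinear] at hc
  obtain ⟨f, rfl⟩ := hc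
  have hpos := Nat.pos_of_ne_zero (hammingNorm_ne_zero_iff.2 hc0)
  rw [vecMulLinear_apply, hammingNorm_vecMul_incMat] at hpos ⊢
  obtain ⟨⟨a, b⟩, hab⟩ := card_pos.1 hpos
  rw [mk_mem_interedges_iff] at hab
  exact G.card_sub_two_le_card_interedges hG ⟨a, hab.1⟩ ⟨b, hab.2.1⟩

end SimpleGraph

theorem three_le_card_of_ringChar_ne_two {R : Type*} [Ring R] [Nontrivial R] [Fintype R]
    (hR : ringChar R ≠ 2) : 3 ≤ Fintype.card R :=
  Fintype.two_lt_card_iff.2 ⟨0, 1, -1, zero_ne_one, by simp,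
    (Ring.neg_one_ne_one_of_char_ne_two hR).symm⟩

section UnitGraph

variable {K : Type*} [Field K]

theorem unitGraphR_adj {x y : K} : (unitGraphR K).Adj x y ↔ x ≠ y ∧ x + y ≠ 0 := by
  simp [unitGraphR]

theorem eq_neg_of_compl_unitGraphR_adj {x y : K} (h : (unitGraphR K)ᶜ.Adj x y) : y = -x := by
  rw [compl_adj, unitGraphR_adj] at h
  exact eq_neg_of_add_eq_zero_right (by simpa [h.1] using h.2)

theorem unitGraphR_connected : (unitGraphR K).Connected := by
  have h0 : ∀ x : K, (unitGraphR K).Reachable 0 x := fun x => by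
    rcases eq_or_ne x 0 with rfl | hx
    · rfl
    · exact Adj.reachable (unitGraphR_adj.2 ⟨hx.symm, by simpa using hx⟩)
  exact Connected.mk fun x y => (h0 x).symm.trans (h0 y)

variable [Fintype K]

theorem neighborFinset_unitGraphR (x : K) : (unitGraphR K).neighborFinset x = {x, -x}ᶜ := by
  ext y
  simp [unitGraphR_adj, eq_neg_iff_add_eq_zero, eq_comm, add_comm]

theorem degree_unitGraphR (hK : ringChar K ≠ 2) (x : K) :
    (unitGraphR K).degree x = if x = 0 then Fintype.card K - 1 else Fintype.card K - 2 := by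
  rw [← card_neighborFinset_eq_degree, neighborFinset_unitGraphR, card_compl]
  split_ifs with hx
  · simp [hx]
  · rw [card_pair (Ne.symm ((Ring.eq_self_iff_eq_zero_of_char_ne_two hK).not.2 hx))]

theorem card_edgeFinset_unitGraphR (hK : ringChar K ≠ 2) :
    #(unitGraphR K).edgeFinset = (Fintype.card K - 1) ^ 2 / 2 := by
  have hsum := (unitGraphR K).sum_degrees_eq_twice_card_edges
  simp only [degree_unitGraphR hK] at hsum
  rw [Fintype.sum_eq_add_sum_compl 0, if_pos rfl,
    sum_congr rfl fun x hx => if_neg (mem_compl.1 hx ∘ mem_singleton.2), sum_const, card_compl,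
    card_singleton, smul_eq_mul] at hsum
  have hsq : Fintype.card K - 1 + (Fintype.card K - 1) * (Fintype.card K - 2) =
      (Fintype.card K - 1) ^ 2 := by
    obtain ⟨r, hr⟩ : ∃ r, Fintype.card K = r + 2 :=
      ⟨Fintype.card K - 2, by have := three_le_card_of_ringChar_ne_two hK; omega⟩
    rw [hr, Nat.add_sub_cancel, show r + 2 - 1 = r + 1 by omega]
    ring
  omega

theorem minDist_unitGraphR (hK : ringChar K ≠ 2) :
    minDist (unitGraphR K) = Fintype.card K - 2 := by
  have hdeg : (unitGraphR K).degree 1 = Fintype.card K - 2 := by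
    rw [degree_unitGraphR hK, if_neg one_ne_zero]
  have hrow : incMat (unitGraphR K) 1 ≠ 0 := by
    rw [← hammingNorm_ne_zero_iff, hammingNorm_incMat, hdeg]
    have := three_le_card_of_ringChar_ne_two hK
    omega
  refine IsLeast.csInf_eq ⟨⟨_, Submodule.subset_span ⟨1, rfl⟩, hrow, by
    rw [hammingNorm_incMat, hdeg]⟩, ?_⟩
  rintro _ ⟨c, hc, hc0, rfl⟩
  exact card_sub_two_le_hammingNorm _ (fun x y z hy hz =>
    (eq_neg_of_compl_unitGraphR_adj hy).trans (eq_neg_of_compl_unitGraphR_adj hz).symm) hc hc0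

end UnitGraph

theorem unitGraph_ZMod_p_code_params (p : ℕ) [Fact p.Prime] (hodd : Odd p) :
    (unitGraph p).edgeFinset.card = (p - 1) ^ 2 / 2 ∧
      Module.finrank (ZMod 2) (rowCode (unitGraph p)) = p - 1 ∧
      minDist (unitGraph p) = p - 2 := by
  have hchar : ringChar (ZMod p) ≠ 2 := by
    rw [ZMod.ringChar_zmod_n]
    rintro rfl
    exact Nat.not_odd_iff_even.2 even_two hodd
  refine ⟨?_, ?_, ?_⟩
  · rw [unitGraph, card_edgeFinset_unitGraphR hchar, ZMod.card]
  · rw [unitGraph, finrank_rowCode _ unitGraphR_connected, ZMod.card]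
  · rw [unitGraph, minDist_unitGraphR hchar, ZMod.card]
end
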